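/- arXiv:0910.5435 — 2 statements merged into one kernel-verified Lean document; each statement's English description precedes it below -/
import Mathlib

section
/- For any nonnegative integer m and any integer l ≥ m, the normalized associated Legendre function P̄_l^m satisfies the Sturm–Liouville differential equation -d/dx((1-x²) d/dx P̄_l^m(x)) + (m²/(1-x²) - l(l+1)) P̄_l^m(x) = 0 for all x in (-1,1). -/
open scoped Nat

/-- The Legendre polynomial of degree `l`, via Rodrigues' formula. -/
noncomputable def legendreP (l : ℕ) : ℝ → ℝ := fun x =>
  (1 / (2 ^ l * (l ! : ℝ))) * iteratedDeriv l (fun y : ℝ => (y ^ 2 - 1) ^ l) x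

/-- The normalized associated Legendre function `P̄_l^m`. -/
noncomputable def nalf (m l : ℕ) : ℝ → ℝ := fun x =>
  Real.sqrt ((2 * l + 1) / 2 * ((l - m)! : ℝ) / ((l + m)! : ℝ)) *
    (1 - x ^ 2) ^ ((m : ℝ) / 2) * iteratedDeriv m (legendreP l) x

/-- The spectral (l²-operator) norm of a real matrix. -/
noncomputable def specNorm {α β : Type*} [Fintype α] [Fintype β] [DecidableEq α] [DecidableEq β]
    (A : Matrix α β ℝ) : ℝ :=
  ‖LinearMap.toContinuousLinearMap (Matrix.toEuclideanLin A)‖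

/-- The singular values of a real matrix, listed in decreasing order. -/
noncomputable def singularValues {p q : ℕ} (A : Matrix (Fin p) (Fin q) ℝ) : List ℝ :=
  List.insertionSort (· ≥ ·)
    (List.ofFn fun i => Real.sqrt ((Matrix.isHermitian_conjTranspose_mul_self A).eigenvalues i))

noncomputable def ccoef (m l : ℕ) : ℝ :=
  Real.sqrt ((((l : ℝ) - m + 1) * ((l : ℝ) - m + 2) * ((l : ℝ) + m + 1) * ((l : ℝ) + m + 2)) /
    ((2 * (l : ℝ) + 1) * (2 * (l : ℝ) + 3) ^ 2 * (2 * (l : ℝ) + 5)))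

noncomputable def dcoef (m l : ℕ) : ℝ :=
  (2 * (l : ℝ) * ((l : ℝ) + 1) - 2 * (m : ℝ) ^ 2 - 1) /
    ((2 * (l : ℝ) - 1) * (2 * (l : ℝ) + 3))

/-!
The polynomial `u = (X² - 1)^l` satisfies `(X² - 1) u' = 2 l X u`. Differentiating this identity
`k + 1` times gives a three-term relation between `u⁽ᵏ⁾, u⁽ᵏ⁺¹⁾, u⁽ᵏ⁺²⁾`; for `k = l + m` it says
that `w = u⁽ˡ⁺ᵐ⁾`, a constant multiple of `dᵐ P_l / dxᵐ`, solves
`(1 - x²) w'' - 2 (m + 1) x w' + (l - m) (l + m + 1) w = 0`.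
The substitution `P̄_l^m = (1 - x²)^{m/2} w` turns this into the associated Legendre equation.
-/

open Polynomial Set Filter Topology

theorem Polynomial.iteratedDeriv_eval {𝕜 : Type*} [NontriviallyNormedField 𝕜] (p : 𝕜[X])
    (n : ℕ) : iteratedDeriv n (fun x => p.eval x) = fun x => (derivative^[n] p).eval x := by
  induction n with
  | zero => rfl
  | succ n ih =>
    funext x
    rw [iteratedDeriv_succ, ih, Function.iterate_succ_apply']
    exact Polynomial.deriv _

section LegendreODE

variable {R : Type*} [CommRing R]

theorem sq_sub_one_mul_derivative_derivative_of_eq {q r : R[X]} {α β : R}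
    (h : (X ^ 2 - 1) * derivative q = C α * X * q + C β * r) :
    (X ^ 2 - 1) * derivative (derivative q) =
      C (α - 2) * X * derivative q + C α * q + C β * derivative r := by
  have h' := congrArg derivative h
  simp only [derivative_mul, derivative_sub, derivative_X_pow, derivative_one, derivative_C,
    derivative_X, derivative_add, Nat.cast_ofNat, map_ofNat] at h'
  rw [map_sub, map_ofNat]
  linear_combination h'

theorem sq_sub_one_mul_iterate_derivative {p : R[X]} {a : R}
    (h : (X ^ 2 - 1) * derivative p = C (2 * a) * X * p) (k : ℕ) :
    (X ^ 2 - 1) * derivative^[k + 2] p =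
      C (2 * (a - k - 1)) * X * derivative^[k + 1] p +
        C ((k + 1) * (2 * a - k)) * derivative^[k] p := by
  induction k with
  | zero =>
    have h0 : (X ^ 2 - 1) * derivative p = C (2 * a) * X * p + C 0 * p := by
      rw [map_zero, zero_mul, add_zero, h]
    have := sq_sub_one_mul_derivative_derivative_of_eq h0
    simp only [Function.iterate_succ_apply', Function.iterate_zero_apply] at this ⊢
    simp only [map_sub, map_mul, map_add, map_ofNat, map_zero, map_one, Nat.cast_zero] at this ⊢
    linear_combination this
  | succ k ih =>
    simp only [Function.iterate_succ_apply'] at ih ⊢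
    have := sq_sub_one_mul_derivative_derivative_of_eq ih
    simp only [map_sub, map_mul, map_add, map_ofNat, map_one, Nat.cast_add, Nat.cast_one] at this ⊢
    linear_combination this

theorem sq_sub_one_mul_derivative_sq_sub_one_pow (l : ℕ) :
    ((X : R[X]) ^ 2 - 1) * derivative ((X ^ 2 - 1) ^ l) =
      C (2 * (l : R)) * X * (X ^ 2 - 1) ^ l := by
  cases l with
  | zero => simp
  | succ k =>
    rw [derivative_pow]
    simp only [derivative_sub, derivative_X_pow, derivative_one, map_mul, map_ofNat, map_natCast,
      Nat.add_sub_cancel, Nat.cast_ofNat, sub_zero, Nat.cast_add, Nat.cast_one, map_add,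
      map_one]
    ring

end LegendreODE

section SturmLiouville

theorem one_sub_sq_pos_of_mem_Ioo {y : ℝ} (hy : y ∈ Ioo (-1 : ℝ) 1) : 0 < 1 - y ^ 2 := by
  nlinarith [hy.1, hy.2]

theorem hasDerivAt_one_sub_sq (y : ℝ) : HasDerivAt (fun z => 1 - z ^ 2) (-2 * y) y := by
  simpa using (hasDerivAt_pow 2 y).const_sub 1

theorem hasDerivAt_one_sub_sq_rpow (r : ℝ) {y : ℝ} (hy : y ∈ Ioo (-1 : ℝ) 1) :
    HasDerivAt (fun z => (1 - z ^ 2) ^ r) (-2 * r * y * (1 - y ^ 2) ^ r / (1 - y ^ 2)) y := by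
  have hpos := one_sub_sq_pos_of_mem_Ioo hy
  convert (hasDerivAt_one_sub_sq y).rpow_const (p := r) (Or.inl hpos.ne') using 1
  rw [Real.rpow_sub hpos, Real.rpow_one]
  ring

theorem sturmLiouville_one_sub_sq_rpow_mul {f f' f'' : ℝ → ℝ} {m L x : ℝ}
    (hx : x ∈ Ioo (-1 : ℝ) 1) (hf : ∀ y ∈ Ioo (-1 : ℝ) 1, HasDerivAt f (f' y) y)
    (hf' : HasDerivAt f' (f'' x) x)
    (hode : (1 - x ^ 2) * f'' x - 2 * (m + 1) * x * f' x + (L - m * (m + 1)) * f x = 0) :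
    -deriv (fun y => (1 - y ^ 2) * deriv (fun z => (1 - z ^ 2) ^ (m / 2) * f z) y) x
      + (m ^ 2 / (1 - x ^ 2) - L) * ((1 - x ^ 2) ^ (m / 2) * f x) = 0 := by
  have hflux : (fun y => (1 - y ^ 2) * deriv (fun z => (1 - z ^ 2) ^ (m / 2) * f z) y) =ᶠ[𝓝 x]
      fun y => (1 - y ^ 2) ^ (m / 2) * (-m * y * f y + (1 - y ^ 2) * f' y) := by
    filter_upwards [isOpen_Ioo.mem_nhds hx] with y hy
    have h : HasDerivAt (fun z => (1 - z ^ 2) ^ (m / 2) * f z) _ y :=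
      (hasDerivAt_one_sub_sq_rpow (m / 2) hy).mul (hf y hy)
    rw [h.deriv]
    field_simp [(one_sub_sq_pos_of_mem_Ioo hy).ne']
  have hg : HasDerivAt (fun y => -m * y * f y + (1 - y ^ 2) * f' y)
      (-m * f x - m * x * f' x - 2 * x * f' x + (1 - x ^ 2) * f'' x) x := by
    refine ((((hasDerivAt_id x).const_mul (-m)).mul (hf x hx)).add
      ((hasDerivAt_one_sub_sq x).mul hf')).congr_deriv ?_
    simp only [id]
    ring
  have hflux_deriv : HasDerivAt (fun y => (1 - y ^ 2) ^ (m / 2) * (-m * y * f y + (1 - y ^ 2) * f' y))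
      _ x := (hasDerivAt_one_sub_sq_rpow (m / 2) hx).mul hg
  rw [hflux.deriv_eq, hflux_deriv.deriv]
  field_simp [(one_sub_sq_pos_of_mem_Ioo hx).ne']
  linear_combination -(1 - x ^ 2) ^ (m / 2) * (1 - x ^ 2) * hode

end SturmLiouville

theorem nalf_eq_mul_eval_iterate_derivative (m l : ℕ) :
    nalf m l = fun x => (1 - x ^ 2) ^ ((m : ℝ) / 2) *
      (Real.sqrt ((2 * l + 1) / 2 * ((l - m)! : ℝ) / ((l + m)! : ℝ)) / (2 ^ l * (l ! : ℝ)) *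
        (derivative^[l + m] ((X ^ 2 - 1) ^ l)).eval x) := by
  have hP : legendreP l = fun x => (C (1 / (2 ^ l * (l ! : ℝ))) *
      derivative^[l] ((X ^ 2 - 1) ^ l)).eval x := by
    have hu : (fun y : ℝ => (y ^ 2 - 1) ^ l) = fun y => ((X ^ 2 - 1) ^ l : ℝ[X]).eval y := by
      simp
    funext x
    simp only [legendreP, hu, iteratedDeriv_eval, eval_mul, eval_C]
  funext x
  rw [nalf, hP, iteratedDeriv_eval, iterate_derivative_C_mul, ← Function.iterate_add_apply,
    add_comm m l]
  simp only [eval_mul, eval_C]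
  ring

theorem sturm_liouville_nalf_general (m l : ℕ) (x : ℝ)
    (hx : x ∈ Set.Ioo (-1 : ℝ) 1) :
    -deriv (fun y : ℝ => (1 - y ^ 2) * deriv (nalf m l) y) x
      + ((m : ℝ) ^ 2 / (1 - x ^ 2) - l * (l + 1)) * nalf m l x = 0 := by
  set w : ℝ[X] := derivative^[l + m] ((X ^ 2 - 1) ^ l)
  obtain ⟨c, hc⟩ : ∃ c : ℝ, nalf m l = fun x => (1 - x ^ 2) ^ ((m : ℝ) / 2) * (c * w.eval x) :=
    ⟨_, nalf_eq_mul_eval_iterate_derivative m l⟩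
  have hode := congrArg (eval x) <|
    sq_sub_one_mul_iterate_derivative (sq_sub_one_mul_derivative_sq_sub_one_pow (R := ℝ) l) (l + m)
  simp only [Function.iterate_succ_apply', eval_mul, eval_add, eval_sub, eval_pow, eval_C, eval_X,
    eval_one, Nat.cast_add] at hode
  rw [hc]
  refine sturmLiouville_one_sub_sq_rpow_mul
    (f'' := fun y => c * (derivative (derivative w)).eval y) hx (fun y _ => (w.hasDerivAt y).const_mul c) ((derivative w).hasDerivAt x |>.const_mul c) ?_
  linear_combination -c * hode

theorem sturm_liouville_nalf (m l : ℕ) (hml : m ≤ l) (x : ℝ)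
    (hx : x ∈ Set.Ioo (-1 : ℝ) 1) :
    -deriv (fun y : ℝ => (1 - y ^ 2) * deriv (nalf m l) y) x
      + ((m : ℝ) ^ 2 / (1 - x ^ 2) - l * (l + 1)) * nalf m l x = 0 :=
  sturm_liouville_nalf_general m l x hx
end

section
/- For any nonnegative integers m and n with n > 0, the normalized associated Legendre function P̄^m_{m+2n+1} has exactly n zeros in the open interval (0,1). -/
open scoped Nat

/-!
On `(-1, 1)`, `P̄_l^m` is a positive multiple of the polynomial `q = (d/dx)^(l+m) (x² - 1)^l`,
of degree `l - m`. Repeated Rolle, starting from the roots `±1` of multiplicity `l` of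
`(x² - 1)^l`, shows that its `k`-th derivative has at least `k` distinct roots in `(-1, 1)` for
`k ≤ l`, and at least `2l - k` for `k ≥ l`. Hence all `l - m` roots of `q` are simple and lie in
`(-1, 1)`. For `l = m + 2n + 1` the polynomial `q` is odd, so its roots are `0` and `n` pairs `±y`.
-/

open Polynomial Set

namespace Polynomial

variable {R : Type*}

theorem natDegree_iterate_derivative_eq [Semiring R] [IsAddTorsionFree R] (p : R[X]) (k : ℕ) :
    (derivative^[k] p).natDegree = p.natDegree - k := by
  induction k with
  | zero => rfl
  | succ k ih => rw [Function.iterate_succ_apply', natDegree_derivative, ih, Nat.sub_sub]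

theorem iterate_derivative_comp_neg_X [CommRing R] (p : R[X]) (k : ℕ) :
    derivative^[k] (p.comp (-X)) = (-1) ^ k * (derivative^[k] p).comp (-X) := by
  induction k generalizing p with
  | zero => simp
  | succ k ih => simp [ih (derivative p), derivative_comp, pow_succ]

theorem isRoot_iterate_derivative_of_pow_dvd [CommRing R] {p : R[X]} {a : R} {k l : ℕ}
    (hk : k < l) (h : (X - C a) ^ l ∣ p) : (derivative^[k] p).IsRoot a :=
  dvd_iff_isRoot.mp <| (dvd_pow_self _ (Nat.sub_ne_zero_of_lt hk)).trans
    (pow_sub_dvd_iterate_derivative_of_pow_dvd k h)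

theorem roots_toFinset_eq_of_natDegree_le_card [CommRing R] [IsDomain R] [DecidableEq R]
    {p : R[X]} (hp : p ≠ 0) {t : Finset R} (ht : ∀ x ∈ t, p.IsRoot x)
    (hcard : p.natDegree ≤ t.card) :
    p.roots.toFinset = t := by
  refine (Finset.eq_of_subset_of_card_le (fun x hx => ?_) ?_).symm
  · exact Multiset.mem_toFinset.2 ((mem_roots hp).2 (ht x hx))
  · exact (Multiset.toFinset_card_le _).trans ((card_roots' p).trans hcard)

noncomputable def rootsIoo (p : ℝ[X]) (a b : ℝ) : Finset ℝ :=
  p.roots.toFinset.filter (· ∈ Ioo a b)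

theorem mem_rootsIoo {p : ℝ[X]} (hp : p ≠ 0) {a b x : ℝ} :
    x ∈ rootsIoo p a b ↔ p.IsRoot x ∧ x ∈ Ioo a b := by
  rw [rootsIoo, Finset.mem_filter, Multiset.mem_toFinset, mem_roots hp]

/-- Rolle: between two consecutive roots of `p` lies a root of `p'`. -/
theorem card_le_card_rootsIoo_derivative_add_one {p : ℝ[X]} (hp : derivative p ≠ 0) {a b : ℝ}
    {s : Finset ℝ} (hs : ∀ x ∈ s, p.IsRoot x ∧ x ∈ Icc a b) :
    s.card ≤ (rootsIoo (derivative p) a b).card + 1 := by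
  refine Finset.card_le_of_interleaved fun x hx y hy hxy _ => ?_
  obtain ⟨hpx, hxa, -⟩ := hs x hx
  obtain ⟨hpy, -, hyb⟩ := hs y hy
  obtain ⟨z, hz, hz0⟩ := exists_deriv_eq_zero hxy p.continuousOn (hpx.trans hpy.symm)
  refine ⟨z, (mem_rootsIoo hp).2 ⟨?_, hxa.trans_lt hz.1, hz.2.trans_le hyb⟩, hz⟩
  rwa [IsRoot, ← p.deriv]

theorem iteratedDeriv_eval_s3 {𝕜 : Type*} [NontriviallyNormedField 𝕜] (p : 𝕜[X]) (k : ℕ) :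
    iteratedDeriv k (fun x => p.eval x) = fun x => (derivative^[k] p).eval x := by
  induction k with
  | zero => rfl
  | succ k ih =>
    rw [iteratedDeriv_succ, ih, Function.iterate_succ_apply']
    funext x
    exact Polynomial.deriv _

end Polynomial

theorem Finset.card_eq_two_mul_card_filter_pos_add_one {G : Type*} [AddCommGroup G]
    [LinearOrder G] [IsOrderedAddMonoid G] {s : Finset G} (hs : ∀ x ∈ s, -x ∈ s)
    (h0 : (0 : G) ∈ s) :
    s.card = 2 * (s.filter (0 < ·)).card + 1 := by
  have hneg : (s.filter (· < 0)).card = (s.filter (0 < ·)).card :=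
    Finset.card_nbij' (-·) (-·) (by intro x; simp +contextual [hs])
      (by intro x; simp +contextual [hs])
      (fun x _ => neg_neg x) (fun x _ => neg_neg x)
  have hnonpos : s.filter (fun x => ¬ 0 < x) = insert 0 (s.filter (· < 0)) := by
    ext x
    simp only [Finset.mem_filter, Finset.mem_insert, not_lt]
    constructor
    · rintro ⟨hx, hx0⟩
      rcases hx0.lt_or_eq with h | h
      · exact Or.inr ⟨hx, h⟩
      · exact Or.inl h
    · rintro (rfl | ⟨hx, hx0⟩)
      · exact ⟨h0, le_rfl⟩
      · exact ⟨hx, hx0.le⟩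
  have hsplit := Finset.card_filter_add_card_filter_not (s := s) (0 < ·)
  rw [hnonpos, Finset.card_insert_of_notMem (by simp)] at hsplit
  omega

theorem exists_strictMono_fin_of_finset {α : Type*} [LinearOrder α] {P : α → Prop}
    {t : Finset α} {n : ℕ} (ht : t.card = n) (hP : ∀ z, P z ↔ z ∈ t) :
    ∃ y : Fin n → α, StrictMono y ∧ (∀ j, P (y j)) ∧ ∀ z, P z → ∃ j, z = y j := by
  refine ⟨t.orderEmbOfFin ht, (t.orderEmbOfFin ht).strictMono,
    fun j => (hP _).2 (t.orderEmbOfFin_mem ht j), fun z hz => ?_⟩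
  obtain ⟨j, hj⟩ : z ∈ Set.range (t.orderEmbOfFin ht) := by
    rw [Finset.range_orderEmbOfFin]; exact (hP z).1 hz
  exact ⟨j, hj.symm⟩

noncomputable def rodriguesPoly (l : ℕ) : ℝ[X] := (X ^ 2 - 1) ^ l

section rodriguesPoly

variable (l : ℕ)

theorem rodriguesPoly_eq_mul : rodriguesPoly l = (X - C 1) ^ l * (X - C (-1)) ^ l := by
  rw [rodriguesPoly, ← mul_pow]
  congr 1
  simp only [map_one, map_neg]
  ring

theorem natDegree_rodriguesPoly : (rodriguesPoly l).natDegree = 2 * l := by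
  rw [rodriguesPoly, natDegree_pow, mul_comm]
  congr 1
  compute_degree!

theorem rodriguesPoly_comp_neg_X : (rodriguesPoly l).comp (-X) = rodriguesPoly l := by
  simp [rodriguesPoly]

theorem iterate_derivative_rodriguesPoly_comp_neg_X (k : ℕ) :
    (derivative^[k] (rodriguesPoly l)).comp (-X) = (-1) ^ k * derivative^[k] (rodriguesPoly l) := by
  have h := iterate_derivative_comp_neg_X (rodriguesPoly l) k
  rw [rodriguesPoly_comp_neg_X] at h
  conv_lhs => rw [h]
  simp [mul_comp, comp_neg_X_comp_neg_X]

theorem eval_neg_iterate_derivative_rodriguesPoly {k : ℕ} (hk : Odd k) (x : ℝ) :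
    (derivative^[k] (rodriguesPoly l)).eval (-x) = -(derivative^[k] (rodriguesPoly l)).eval x := by
  have h := congrArg (eval x) (iterate_derivative_rodriguesPoly_comp_neg_X l k)
  rwa [hk.neg_one_pow, eval_comp, eval_neg, eval_X, neg_one_mul, eval_neg] at h

theorem natDegree_iterate_derivative_rodriguesPoly (k : ℕ) :
    (derivative^[k] (rodriguesPoly l)).natDegree = 2 * l - k := by
  rw [natDegree_iterate_derivative_eq, natDegree_rodriguesPoly]

theorem iterate_derivative_rodriguesPoly_ne_zero {k : ℕ} (hk : k < 2 * l) :
    derivative^[k] (rodriguesPoly l) ≠ 0 :=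
  ne_zero_of_natDegree_gt (n := 0) (by rw [natDegree_iterate_derivative_rodriguesPoly]; omega)

theorem derivative_iterate_derivative_rodriguesPoly_ne_zero {k : ℕ} (hk : k + 1 < 2 * l) :
    derivative (derivative^[k] (rodriguesPoly l)) ≠ 0 := by
  rw [← Function.iterate_succ_apply' derivative]
  exact iterate_derivative_rodriguesPoly_ne_zero l hk

theorem le_card_rootsIoo_iterate_derivative_rodriguesPoly {k : ℕ} (hk : k ≤ l) :
    k ≤ (rootsIoo (derivative^[k] (rodriguesPoly l)) (-1) 1).card := by
  induction k with
  | zero => exact Nat.zero_le _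
  | succ k ih =>
    set p := derivative^[k] (rodriguesPoly l)
    have hp : p ≠ 0 := iterate_derivative_rodriguesPoly_ne_zero l (by omega)
    have hroot_one : p.IsRoot 1 := isRoot_iterate_derivative_of_pow_dvd (by omega)
      (rodriguesPoly_eq_mul l ▸ dvd_mul_right _ _)
    have hroot_neg_one : p.IsRoot (-1) := isRoot_iterate_derivative_of_pow_dvd (by omega)
      (rodriguesPoly_eq_mul l ▸ dvd_mul_left _ _)
    -- Rolle on the roots in `(-1, 1)` together with the endpoints `±1`.
    set S := insert (-1) (insert 1 (rootsIoo p (-1) 1))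
    have hS : ∀ x ∈ S, p.IsRoot x ∧ x ∈ Icc (-1) 1 := by
      intro x hx
      simp only [S, Finset.mem_insert, mem_rootsIoo hp] at hx
      rcases hx with rfl | rfl | ⟨hx, hx'⟩
      · exact ⟨hroot_neg_one, by norm_num, by norm_num⟩
      · exact ⟨hroot_one, by norm_num, by norm_num⟩
      · exact ⟨hx, Ioo_subset_Icc_self hx'⟩
    have hcard : S.card = (rootsIoo p (-1) 1).card + 2 := by
      rw [Finset.card_insert_of_notMem, Finset.card_insert_of_notMem]
      · simp [mem_rootsIoo hp]
      · norm_num [mem_rootsIoo hp]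
    have hrolle := card_le_card_rootsIoo_derivative_add_one
      (derivative_iterate_derivative_rodriguesPoly_ne_zero l (k := k) (by omega)) hS
    rw [Function.iterate_succ_apply']
    omega

theorem sub_le_card_rootsIoo_iterate_derivative_rodriguesPoly {k : ℕ} (hk : k < l) :
    l - k ≤ (rootsIoo (derivative^[l + k] (rodriguesPoly l)) (-1) 1).card := by
  induction k with
  | zero => exact le_card_rootsIoo_iterate_derivative_rodriguesPoly l le_rfl
  | succ k ih =>
    set p := derivative^[l + k] (rodriguesPoly l)
    have hp : p ≠ 0 := iterate_derivative_rodriguesPoly_ne_zero l (by omega)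
    have hs : ∀ x ∈ rootsIoo p (-1) 1, p.IsRoot x ∧ x ∈ Icc (-1) 1 := fun x hx =>
      ((mem_rootsIoo hp).1 hx).imp_right (Ioo_subset_Icc_self ·)
    have hrolle := card_le_card_rootsIoo_derivative_add_one
      (derivative_iterate_derivative_rodriguesPoly_ne_zero l (k := l + k) (by omega)) hs
    rw [← add_assoc, Function.iterate_succ_apply']
    omega

theorem roots_toFinset_iterate_derivative_rodriguesPoly {m : ℕ} (hm : m < l) :
    (derivative^[l + m] (rodriguesPoly l)).roots.toFinset =
      rootsIoo (derivative^[l + m] (rodriguesPoly l)) (-1) 1 := by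
  have hq := iterate_derivative_rodriguesPoly_ne_zero l (k := l + m) (by omega)
  refine roots_toFinset_eq_of_natDegree_le_card hq (fun x hx => ((mem_rootsIoo hq).1 hx).1) ?_
  rw [natDegree_iterate_derivative_rodriguesPoly, show 2 * l - (l + m) = l - m by omega]
  exact sub_le_card_rootsIoo_iterate_derivative_rodriguesPoly l hm

theorem card_roots_toFinset_iterate_derivative_rodriguesPoly {m : ℕ} (hm : m < l) :
    (derivative^[l + m] (rodriguesPoly l)).roots.toFinset.card = l - m := by
  refine le_antisymm ?_ ?_
  · calc _ ≤ Multiset.card (derivative^[l + m] (rodriguesPoly l)).roots :=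
          Multiset.toFinset_card_le _
      _ ≤ _ := card_roots' _
      _ = l - m := by rw [natDegree_iterate_derivative_rodriguesPoly]; omega
  · rw [roots_toFinset_iterate_derivative_rodriguesPoly l hm]
    exact sub_le_card_rootsIoo_iterate_derivative_rodriguesPoly l hm

theorem mem_roots_toFinset_iterate_derivative_rodriguesPoly {m : ℕ} (hm : m < l) {x : ℝ} :
    x ∈ (derivative^[l + m] (rodriguesPoly l)).roots.toFinset ↔
      (derivative^[l + m] (rodriguesPoly l)).IsRoot x ∧ x ∈ Ioo (-1) 1 := by
  rw [roots_toFinset_iterate_derivative_rodriguesPoly l hm,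
    mem_rootsIoo (iterate_derivative_rodriguesPoly_ne_zero l (by omega))]

/-- The roots are symmetric about `0` and include it, so half of the others are positive. -/
theorem two_mul_card_pos_roots_iterate_derivative_rodriguesPoly_add_one {m : ℕ} (hm : m < l)
    (hodd : Odd (l + m)) :
    2 * ((derivative^[l + m] (rodriguesPoly l)).roots.toFinset.filter (0 < ·)).card + 1 =
      l - m := by
  have hsymm : ∀ x ∈ (derivative^[l + m] (rodriguesPoly l)).roots.toFinset,
      -x ∈ (derivative^[l + m] (rodriguesPoly l)).roots.toFinset := by
    intro x hx
    obtain ⟨hroot, hlo, hhi⟩ := (mem_roots_toFinset_iterate_derivative_rodriguesPoly l hm).1 hx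
    refine (mem_roots_toFinset_iterate_derivative_rodriguesPoly l hm).2
      ⟨?_, by linarith, by linarith⟩
    rw [IsRoot, eval_neg_iterate_derivative_rodriguesPoly l hodd, hroot, neg_zero]
  have hzero : (0 : ℝ) ∈ (derivative^[l + m] (rodriguesPoly l)).roots.toFinset := by
    have h := eval_neg_iterate_derivative_rodriguesPoly l hodd 0
    rw [neg_zero] at h
    exact (mem_roots_toFinset_iterate_derivative_rodriguesPoly l hm).2
      ⟨by rw [IsRoot.def]; linarith, by norm_num, by norm_num⟩
  rw [← card_roots_toFinset_iterate_derivative_rodriguesPoly l hm,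
    Finset.card_eq_two_mul_card_filter_pos_add_one hsymm hzero]

end rodriguesPoly

theorem iteratedDeriv_legendreP (m l : ℕ) :
    iteratedDeriv m (legendreP l) =
      fun x => 1 / (2 ^ l * (l ! : ℝ)) * (derivative^[l + m] (rodriguesPoly l)).eval x := by
  have h : legendreP l =
      fun x => (C (1 / (2 ^ l * (l ! : ℝ))) * derivative^[l] (rodriguesPoly l)).eval x := by
    have hr : (fun y : ℝ => (y ^ 2 - 1) ^ l) = fun y => (rodriguesPoly l).eval y := by
      funext y; simp [rodriguesPoly]
    funext x
    rw [legendreP, hr, iteratedDeriv_eval_s3, eval_mul, eval_C]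
  rw [h, iteratedDeriv_eval_s3, iterate_derivative_C_mul, ← Function.iterate_add_apply, add_comm m l]
  simp

theorem nalf_eq_zero_iff {m l : ℕ} {x : ℝ} (hx : x ∈ Ioo (-1) 1) :
    nalf m l x = 0 ↔ (derivative^[l + m] (rodriguesPoly l)).IsRoot x := by
  have hnorm : 0 < Real.sqrt ((2 * l + 1) / 2 * ((l - m)! : ℝ) / ((l + m)! : ℝ)) := by
    have := Nat.factorial_pos (l - m)
    have := Nat.factorial_pos (l + m)
    positivity
  have hweight : 0 < (1 - x ^ 2) ^ ((m : ℝ) / 2) :=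
    Real.rpow_pos_of_pos (by nlinarith [hx.1, hx.2]) _
  have hconst : (0 : ℝ) < 1 / (2 ^ l * (l ! : ℝ)) := by
    have := Nat.factorial_pos l
    positivity
  simp only [nalf, iteratedDeriv_legendreP, mul_eq_zero, hnorm.ne', hweight.ne', hconst.ne',
    false_or, IsRoot.def]

theorem zeros_of_nalf_odd_general (m n : ℕ) :
    ∃ y : Fin n → ℝ, StrictMono y ∧
      (∀ j, y j ∈ Set.Ioo (0 : ℝ) 1 ∧ nalf m (m + 2 * n + 1) (y j) = 0) ∧
      (∀ z ∈ Set.Ioo (0 : ℝ) 1, nalf m (m + 2 * n + 1) z = 0 → ∃ j, z = y j) := by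
  set l := m + 2 * n + 1
  have hm : m < l := by omega
  have hcard := two_mul_card_pos_roots_iterate_derivative_rodriguesPoly_add_one l hm
    ⟨m + n, by omega⟩
  set q := derivative^[l + m] (rodriguesPoly l)
  have hzeros :
      ∀ z, (z ∈ Ioo 0 1 ∧ nalf m l z = 0) ↔ z ∈ q.roots.toFinset.filter (0 < ·) := by
    intro z
    rw [Finset.mem_filter, mem_roots_toFinset_iterate_derivative_rodriguesPoly l hm]
    constructor
    · rintro ⟨⟨hz0, hz1⟩, hnalf⟩
      exact ⟨⟨(nalf_eq_zero_iff ⟨by linarith, hz1⟩).1 hnalf, by linarith, hz1⟩, hz0⟩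
    · rintro ⟨⟨hroot, hz⟩, hz0⟩
      exact ⟨⟨hz0, hz.2⟩, (nalf_eq_zero_iff hz).2 hroot⟩
  obtain ⟨y, hmono, hy, hall⟩ := exists_strictMono_fin_of_finset (n := n) (by omega) hzeros
  exact ⟨y, hmono, hy, fun z hz hnalf => hall z ⟨hz, hnalf⟩⟩

theorem zeros_of_nalf_odd (m n : ℕ) (hn : 0 < n) :
    ∃ y : Fin n → ℝ, StrictMono y ∧
      (∀ j, y j ∈ Set.Ioo (0 : ℝ) 1 ∧ nalf m (m + 2 * n + 1) (y j) = 0) ∧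
      (∀ z ∈ Set.Ioo (0 : ℝ) 1, nalf m (m + 2 * n + 1) z = 0 → ∃ j, z = y j) :=
  zeros_of_nalf_odd_general m n
end
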